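/- arXiv:math/0311457 — 3 statements merged into one kernel-verified Lean document; each statement's English description precedes it below -/
import Mathlib

section
/- Any nonconstant solution σ of (σ')² + τ²cosh²σ = 1 with σ'(0) = 0, σ(0) < 0, for τ ∈ (0,1), is periodic. -/
open Real Set

lemma ode2_unique (g : ℝ → ℝ) (K : NNReal) (hg : LipschitzWith K g)
    (x y : ℝ → ℝ)
    (hx : Differentiable ℝ x) (hx1 : Differentiable ℝ (deriv x))
    (hy : Differentiable ℝ y) (hy1 : Differentiable ℝ (deriv y))
    (hxe : ∀ t, deriv (deriv x) t = g (x t))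
    (hye : ∀ t, deriv (deriv y) t = g (y t))
    (t₀ : ℝ) (h1 : x t₀ = y t₀) (h2 : deriv x t₀ = deriv y t₀) :
    ∀ t, x t = y t := by
  set v : ℝ → ℝ × ℝ → ℝ × ℝ := fun _ p => (p.2, g p.1) with hv
  have hvL : ∀ t : ℝ, LipschitzOnWith (1 ⊔ K * 1) (v t) univ := by
    intro t
    exact ((LipschitzWith.prod_snd.prodMk (hg.comp LipschitzWith.prod_fst))).lipschitzOnWith
  set X : ℝ → ℝ × ℝ := fun t => (x t, deriv x t) with hX
  set Y : ℝ → ℝ × ℝ := fun t => (y t, deriv y t) with hY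
  have hXd : ∀ t : ℝ, HasDerivAt X (v t (X t)) t := by
    intro t
    have := ((hx t).hasDerivAt.prodMk (hx1 t).hasDerivAt)
    rwa [hxe t] at this
  have hYd : ∀ t : ℝ, HasDerivAt Y (v t (Y t)) t := by
    intro t
    have := ((hy t).hasDerivAt.prodMk (hy1 t).hasDerivAt)
    rwa [hye t] at this
  intro t
  have hab : t₀ ∈ Ioo (min t t₀ - 1) (max t t₀ + 1) := by
    constructor <;> nlinarith [min_le_right t t₀, le_max_right t t₀]
  have key : EqOn X Y (Icc (min t t₀ - 1) (max t t₀ + 1)) := by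
    apply ODE_solution_unique_of_mem_Icc (fun t _ => hvL t) hab
    · exact fun s _ => ((hXd s).continuousAt).continuousWithinAt
    · exact fun s _ => hXd s
    · exact fun _ _ => mem_univ _
    · exact fun s _ => ((hYd s).continuousAt).continuousWithinAt
    · exact fun s _ => hYd s
    · exact fun _ _ => mem_univ _
    · simp only [hX, hY, h1, h2]
  have ht : t ∈ Icc (min t t₀ - 1) (max t t₀ + 1) := by
    constructor <;> nlinarith [min_le_left t t₀, le_max_left t t₀]
  have := key ht
  exact congrArg Prod.fst this
lemma clamp_lip (M : ℝ) : LipschitzWith 1 (fun x : ℝ => max (-M) (min x M)) :=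
  (LipschitzWith.id.min_const M).const_max (-M)

lemma clamp_mem (M x : ℝ) (hM : 0 ≤ M) : max (-M) (min x M) ∈ Icc (-M) M := by
  constructor
  · exact le_max_left _ _
  · exact max_le (by linarith) (min_le_right _ _)

lemma f0_bound (τ M u : ℝ) (hu : u ∈ Icc (-M) M) (hM : 0 ≤ M) :
    ‖-(τ^2) * (Real.sinh u * Real.sinh u + Real.cosh u * Real.cosh u)‖
      ≤ τ^2 * (Real.sinh M ^ 2 + Real.cosh M ^ 2) := by
  have h1 : |Real.sinh u| ≤ Real.sinh M := by
    have ha := Real.sinh_le_sinh.mpr hu.2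
    have hb := Real.sinh_le_sinh.mpr hu.1
    rw [Real.sinh_neg] at hb
    exact abs_le.mpr ⟨by linarith, ha⟩
  have h2 : Real.cosh u ≤ Real.cosh M := by
    rw [Real.cosh_le_cosh, abs_of_nonneg hM]
    exact abs_le.mpr ⟨hu.1, hu.2⟩
  have h3 := Real.cosh_pos u
  have h4 := abs_nonneg (Real.sinh u)
  rw [Real.norm_eq_abs, abs_mul, abs_neg, abs_of_nonneg (sq_nonneg τ : (0:ℝ) ≤ τ^2)]
  have : |Real.sinh u * Real.sinh u + Real.cosh u * Real.cosh u|
      ≤ Real.sinh M ^ 2 + Real.cosh M ^ 2 := by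
    rw [abs_of_nonneg (by nlinarith)]
    nlinarith [abs_mul_abs_self (Real.sinh u)]
  nlinarith [sq_nonneg τ, abs_nonneg (Real.sinh u * Real.sinh u + Real.cosh u * Real.cosh u)]

lemma f0_lipOn (τ M : ℝ) (hM : 0 ≤ M) (a b : ℝ) (ha : a ∈ Icc (-M) M) (hb : b ∈ Icc (-M) M) :
    ‖(fun u => -(τ^2) * (Real.cosh u * Real.sinh u)) b -
     (fun u => -(τ^2) * (Real.cosh u * Real.sinh u)) a‖
      ≤ (τ^2 * (Real.sinh M ^ 2 + Real.cosh M ^ 2)) * ‖b - a‖ := by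
  apply Convex.norm_image_sub_le_of_norm_hasDerivWithin_le
    (f' := fun u => -(τ^2) * (Real.sinh u * Real.sinh u + Real.cosh u * Real.cosh u))
    (fun u hu => ?_) (fun u hu => f0_bound τ M u hu hM) (convex_Icc _ _) ha hb
  exact (((Real.hasDerivAt_cosh u).mul (Real.hasDerivAt_sinh u)).const_mul (-(τ^2))).hasDerivWithinAt

noncomputable def gclamp (τ M : ℝ) : ℝ → ℝ :=
  fun x => -(τ^2) * (Real.cosh (max (-M) (min x M)) * Real.sinh (max (-M) (min x M)))

lemma gclamp_lip (τ M : ℝ) (hM : 0 ≤ M) :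
    LipschitzWith ((τ^2 * (Real.sinh M ^ 2 + Real.cosh M ^ 2)).toNNReal) (gclamp τ M) := by
  apply LipschitzWith.of_dist_le_mul
  intro a b
  set C := τ^2 * (Real.sinh M ^ 2 + Real.cosh M ^ 2) with hC
  have hC0 : 0 ≤ C := by positivity
  have h1 := f0_lipOn τ M hM (max (-M) (min b M)) (max (-M) (min a M))
    (clamp_mem M b hM) (clamp_mem M a hM)
  have h2 := (clamp_lip M).dist_le_mul a b
  simp only [Real.dist_eq, Real.norm_eq_abs] at *
  rw [Real.coe_toNNReal _ hC0]
  simp only [gclamp]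
  calc |-(τ^2) * (Real.cosh (max (-M) (min a M)) * Real.sinh (max (-M) (min a M))) -
        -(τ^2) * (Real.cosh (max (-M) (min b M)) * Real.sinh (max (-M) (min b M)))|
      ≤ C * |max (-M) (min a M) - max (-M) (min b M)| := h1
    _ ≤ C * |a - b| := by
        apply mul_le_mul_of_nonneg_left _ hC0
        simpa using h2
lemma reflect_sym (g : ℝ → ℝ) (K : NNReal) (hg : LipschitzWith K g) (σ : ℝ → ℝ)
    (hd : Differentiable ℝ σ) (hd1 : Differentiable ℝ (deriv σ))
    (hσe : ∀ t, deriv (deriv σ) t = g (σ t)) (a : ℝ) (ha : deriv σ a = 0) :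
    ∀ t, σ (2*a - t) = σ t := by
  set ρ : ℝ → ℝ := fun t => σ (2*a - t) with hρ
  have haff : ∀ t : ℝ, HasDerivAt (fun t : ℝ => 2*a - t) (-1) t := fun t =>
    (hasDerivAt_id t).const_sub (2*a)
  have hρd : ∀ t, HasDerivAt ρ (-(deriv σ (2*a - t))) t := by
    intro t
    have h := ((hd (2*a-t)).hasDerivAt.comp t (haff t))
    have he : (deriv σ (2*a-t)) * (-1) = -(deriv σ (2*a-t)) := by ring
    rw [← he]; exact h
  have hρderiv : deriv ρ = fun t => -(deriv σ (2*a - t)) := funext fun t => (hρd t).deriv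
  have hρd2 : ∀ t, HasDerivAt (deriv ρ) (g (ρ t)) t := by
    intro t
    rw [hρderiv]
    have := ((hd1 (2*a-t)).hasDerivAt.comp t (haff t)).neg
    have h2 : -(deriv (deriv σ) (2*a-t) * (-1)) = g (ρ t) := by
      rw [hσe]; simp [hρ]
    rw [← h2]
    exact ((hd1 (2*a-t)).hasDerivAt.comp t (haff t)).neg
  have hρdiff : Differentiable ℝ ρ := fun t => (hρd t).differentiableAt
  have hρ1diff : Differentiable ℝ (deriv ρ) := fun t => (hρd2 t).differentiableAt
  have h1 : ρ a = σ a := by show σ (2*a - a) = σ a; congr 1; ring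
  have h2 : deriv ρ a = deriv σ a := by
    rw [hρderiv]; simp only; rw [show 2*a - a = a by ring, ha]; simp [ha]
  exact ode2_unique g K hg ρ σ hρdiff hρ1diff hd hd1 (fun t => (hρd2 t).deriv) hσe a h1 h2

set_option maxHeartbeats 1000000 in
/-- Any nonconstant solution σ of (σ')² + τ²cosh²σ = 1 with σ'(0) = 0, σ(0) < 0,
for τ ∈ (0,1), is periodic. -/
theorem unduloid_profile_periodic (τ : ℝ) (hτ : τ ∈ Set.Ioo (0 : ℝ) 1)
    (σ : ℝ → ℝ) (hσ : ContDiff ℝ (⊤ : ℕ∞) σ)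
    (hode : ∀ s : ℝ, (deriv σ s) ^ 2 + τ ^ 2 * (Real.cosh (σ s)) ^ 2 = 1)
    (h0 : deriv σ 0 = 0) (hneg : σ 0 < 0)
    (hnc : ¬ (∃ c : ℝ, ∀ s : ℝ, σ s = c)) :
    ∃ p : ℝ, 0 < p ∧ Function.Periodic σ p := by
  obtain ⟨hτ0, hτ1⟩ := hτ
  have hσi : ContDiff ℝ ((⊤:ℕ∞):WithTop ℕ∞) σ := hσ.of_le (by simp)
  have hd : Differentiable ℝ σ := hσi.differentiable (by simp)
  have hσ' : ContDiff ℝ ((⊤:ℕ∞):WithTop ℕ∞) (deriv σ) := (contDiff_infty_iff_deriv.mp hσi).2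
  have hd1 : Differentiable ℝ (deriv σ) := hσ'.differentiable (by simp)
  have hσ'' : ContDiff ℝ ((⊤:ℕ∞):WithTop ℕ∞) (deriv (deriv σ)) := (contDiff_infty_iff_deriv.mp hσ').2
  have hd2 : Differentiable ℝ (deriv (deriv σ)) := hσ''.differentiable (by simp)
  have hcont : Continuous σ := hd.continuous
  have hcosh : ∀ s, τ * Real.cosh (σ s) ≤ 1 := by
    intro s
    nlinarith [hode s, sq_nonneg (deriv σ s), Real.cosh_pos (σ s)]
  set M := Real.log (2/τ) with hMdef
  have h2τ : 0 < 2/τ := by positivity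
  have hMb : ∀ s, σ s ∈ Set.Icc (-M) M := by
    intro s
    have hc := hcosh s
    have hce := Real.cosh_eq (σ s)
    have he1 : Real.exp (σ s) ≤ 2/τ := by
      rw [le_div_iff₀ hτ0]
      nlinarith [Real.exp_pos (-(σ s))]
    have he2 : Real.exp (-(σ s)) ≤ 2/τ := by
      rw [le_div_iff₀ hτ0]
      nlinarith [Real.exp_pos (σ s)]
    constructor
    · have := (Real.le_log_iff_exp_le h2τ).mpr he2
      simp only [hMdef]; linarith
    · exact (Real.le_log_iff_exp_le h2τ).mpr he1
  have hM0 : 0 ≤ M := Real.log_nonneg (by rw [le_div_iff₀ hτ0]; linarith)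
  -- differentiated conservation law
  have hkey : ∀ s, deriv σ s *
      (deriv (deriv σ) s + τ^2 * (Real.cosh (σ s) * Real.sinh (σ s))) = 0 := by
    intro s
    have ha : HasDerivAt (fun t => (deriv σ t)^2)
        ((2:ℕ) * deriv σ s ^ 1 * deriv (deriv σ) s) s := (hd1 s).hasDerivAt.pow 2
    have hb : HasDerivAt (fun t => Real.cosh (σ t)) (Real.sinh (σ s) * deriv σ s) s :=
      (hd s).hasDerivAt.cosh
    have hc := (hb.pow 2).const_mul (τ^2)
    have h1 := ha.add hc
    have h0' : HasDerivAt (fun t => (deriv σ t)^2 + τ^2 * (Real.cosh (σ t))^2) 0 s := by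
      have he : (fun t => (deriv σ t)^2 + τ^2 * (Real.cosh (σ t))^2) = fun _ => (1:ℝ) :=
        funext hode
      rw [he]; exact hasDerivAt_const s 1
    have := h1.unique h0'
    push_cast at this
    nlinarith [this]
  set F : ℝ → ℝ := fun s => deriv (deriv σ) s + τ^2 * (Real.cosh (σ s) * Real.sinh (σ s))
    with hFdef
  have hFcont : Continuous F := by
    apply (hσ''.continuous (n := ((⊤:ℕ∞):WithTop ℕ∞))).add
    exact continuous_const.mul ((Real.continuous_cosh.comp hcont).mul
      (Real.continuous_sinh.comp hcont))
  have hF0 : ∀ s, deriv σ s ≠ 0 → F s = 0 := by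
    intro s hs
    rcases mul_eq_zero.mp (hkey s) with h | h
    · exact absurd h hs
    · exact h
  -- Step A : F vanishes identically
  have hZempty : interior {s : ℝ | deriv σ s = 0} = ∅ := by
    by_contra hne
    set Z := interior {s : ℝ | deriv σ s = 0} with hZdef
    by_cases hZu : Z = Set.univ
    · refine hnc ⟨σ 0, fun s => is_const_of_deriv_eq_zero hd (fun t => ?_) s 0⟩
      have h1 : t ∈ Z := hZu ▸ Set.mem_univ t
      have h2 : t ∈ {s : ℝ | deriv σ s = 0} := interior_subset h1
      exact h2
    · have hfr : (frontier Z).Nonempty := by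
        rw [Set.nonempty_iff_ne_empty]
        intro hfe
        rcases isClopen_iff.mp (isClopen_iff_frontier_eq_empty.mpr hfe) with h | h
        · exact hne h
        · exact hZu h
      obtain ⟨b, hb⟩ := hfr
      rw [frontier, isOpen_interior.interior_eq] at hb
      obtain ⟨hbcl, hbZ⟩ := hb
      have hZsub : Z ⊆ {s : ℝ | deriv σ s = 0} := interior_subset
      have hclosed : IsClosed {s : ℝ | deriv σ s = 0} :=
        isClosed_eq hd1.continuous continuous_const
      have hbd : deriv σ b = 0 := hclosed.closure_subset ((closure_mono hZsub) hbcl)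
      have hbc : τ^2 * (Real.cosh (σ b))^2 = 1 := by
        have hsub2 : Z ⊆ {s : ℝ | τ^2 * (Real.cosh (σ s))^2 = 1} := by
          intro s hs
          have h1 : deriv σ s = 0 := hZsub hs
          have := hode s
          simp only [Set.mem_setOf_eq]
          nlinarith
        have hcl2 : IsClosed {s : ℝ | τ^2 * (Real.cosh (σ s))^2 = 1} :=
          isClosed_eq (continuous_const.mul ((Real.continuous_cosh.comp hcont).pow 2))
            continuous_const
        exact hcl2.closure_subset ((closure_mono hsub2) hbcl)
      have hσb0 : σ b ≠ 0 := by
        intro h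
        rw [h] at hbc
        simp [Real.cosh_zero] at hbc
        rcases hbc with h'|h' <;> nlinarith
      have hsinh : Real.sinh (σ b) ≠ 0 := fun h => hσb0 (Real.sinh_eq_zero.mp h)
      -- second derivative vanishes at b
      have hdd0 : deriv (deriv σ) b = 0 := by
        have hhd := hasDerivAt_iff_tendsto_slope.mp (hd1 b).hasDerivAt
        have hnb : (nhdsWithin b Z).NeBot := mem_closure_iff_nhdsWithin_neBot.mp hbcl
        have hsub : Z ⊆ {b}ᶜ := fun x hx h => hbZ (h ▸ hx)
        have h1 : Filter.Tendsto (slope (deriv σ) b) (nhdsWithin b Z)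
            (nhds (deriv (deriv σ) b)) := hhd.mono_left (nhdsWithin_mono b hsub)
        have h2 : slope (deriv σ) b =ᶠ[nhdsWithin b Z] fun _ => (0:ℝ) := by
          filter_upwards [self_mem_nhdsWithin] with t ht
          have ht0 : deriv σ t = 0 := hZsub ht
          simp [slope_def_field, ht0, hbd]
        have h3 : Filter.Tendsto (fun _ : ℝ => (0:ℝ)) (nhdsWithin b Z)
            (nhds (deriv (deriv σ) b)) := Filter.Tendsto.congr' h2 h1
        exact tendsto_nhds_unique h3 tendsto_const_nhds
      -- F b = 0 since b is in the closure of {deriv σ ≠ 0}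
      have hFb : F b = 0 := by
        have hb' : b ∈ closure ({s : ℝ | deriv σ s = 0}ᶜ) := by
          rw [closure_compl]
          exact hbZ
        have hsub3 : {s : ℝ | deriv σ s = 0}ᶜ ⊆ {s : ℝ | F s = 0} := fun s hs => hF0 s hs
        have hcl3 : IsClosed {s : ℝ | F s = 0} := isClosed_eq hFcont continuous_const
        exact hcl3.closure_subset ((closure_mono hsub3) hb')
      -- contradiction
      rw [hFdef] at hFb
      simp only [hdd0, zero_add] at hFb
      have : τ^2 * (Real.cosh (σ b) * Real.sinh (σ b)) ≠ 0 := by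
        apply mul_ne_zero (by positivity)
        exact mul_ne_zero (ne_of_gt (Real.cosh_pos _)) hsinh
      exact this hFb
  have hFzero : ∀ s, F s = 0 := by
    have hdense : Dense ({s : ℝ | deriv σ s = 0}ᶜ) :=
      interior_eq_empty_iff_dense_compl.mp hZempty
    have := Continuous.ext_on hdense hFcont continuous_const (fun s hs => hF0 s hs)
    exact fun s => congrFun this s
  -- the clamped second-order ODE
  have hF' : ∀ s, deriv (deriv σ) s = gclamp τ M (σ s) := by
    intro s
    have h := hFzero s
    have hcl : max (-M) (min (σ s) M) = σ s := by
      rcases hMb s with ⟨h1, h2⟩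
      rw [min_eq_left h2, max_eq_right h1]
    simp only [gclamp, hcl]
    simp only [hFdef] at h
    linarith
  set K := (τ^2 * (Real.sinh M ^ 2 + Real.cosh M ^ 2)).toNNReal with hKdef
  have hglip := gclamp_lip τ M hM0
  have heven : ∀ t, σ (-t) = σ t := by
    intro t
    have := reflect_sym (gclamp τ M) K hglip σ hd hd1 hF' 0 h0 t
    rw [show 2*(0:ℝ) - t = -t by ring] at this
    exact this
  -- Step B : another critical point
  have hex : ∃ s₁, 0 < s₁ ∧ deriv σ s₁ = 0 := by
    by_contra hno
    push_neg at hno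
    have habs : ∀ s, |deriv σ s| ≤ 1 := by
      intro s
      nlinarith [hode s, sq_nonneg (τ * Real.cosh (σ s)), sq_abs (deriv σ s),
        abs_nonneg (deriv σ s)]
    have hσ''0 : 0 < deriv (deriv σ) 0 := by
      have h := hFzero 0
      simp only [hFdef] at h
      have hs : Real.sinh (σ 0) < 0 := by
        have h2 := Real.sinh_lt_sinh.mpr hneg
        rwa [Real.sinh_zero] at h2
      nlinarith [mul_pos (mul_pos (pow_pos hτ0 2) (Real.cosh_pos (σ 0))) (neg_pos.mpr hs)]
    have hslope : Filter.Tendsto (slope (deriv σ) 0) (nhdsWithin 0 (Set.Ioi 0))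
        (nhds (deriv (deriv σ) 0)) :=
      (hasDerivAt_iff_tendsto_slope.mp (hd1 0).hasDerivAt).mono_left
        (nhdsWithin_mono 0 (fun x hx => Set.mem_compl_singleton_iff.mpr (ne_of_gt hx)))
    have hev : ∀ᶠ t in nhdsWithin 0 (Set.Ioi 0), 0 < slope (deriv σ) 0 t :=
      hslope.eventually_const_lt hσ''0
    obtain ⟨t₁, hslope₁, ht₁⟩ := (hev.and self_mem_nhdsWithin).exists
    have ht₁' : (0:ℝ) < t₁ := ht₁
    have hd₁pos : 0 < deriv σ t₁ := by
      have he : slope (deriv σ) 0 t₁ = deriv σ t₁ / t₁ := by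
        simp [slope_def_field, h0]
      rw [he] at hslope₁
      have h2 := mul_pos hslope₁ ht₁'
      rwa [div_mul_cancel₀ _ (ne_of_gt ht₁')] at h2
    have hpos : ∀ s, 0 < s → 0 < deriv σ s := by
      intro s hs
      rcases (hno s hs).lt_or_gt with h | h
      · exfalso
        have hsub : Set.uIcc s t₁ ⊆ Set.Ioi 0 := by
          intro x hx
          rcases Set.mem_uIcc.mp hx with ⟨h1, _⟩ | ⟨h1, _⟩
          · exact lt_of_lt_of_le hs h1
          · exact lt_of_lt_of_le ht₁' h1
        have h0mem : (0:ℝ) ∈ Set.uIcc (deriv σ s) (deriv σ t₁) :=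
          Set.mem_uIcc.mpr (Or.inl ⟨le_of_lt h, le_of_lt hd₁pos⟩)
        obtain ⟨x, hxmem, hx0⟩ := intermediate_value_uIcc hd1.continuous.continuousOn h0mem
        exact hno x (hsub hxmem) hx0
      · exact h
    have hmono : StrictMonoOn σ (Set.Ici 0) :=
      strictMonoOn_of_deriv_pos (convex_Ici 0) hcont.continuousOn
        (fun x hx => hpos x (by rwa [interior_Ici] at hx))
    set ψ : ℝ → ℝ := fun t => σ (max 1 t) with hψdef
    have hmemI : ∀ t : ℝ, max (1:ℝ) t ∈ Set.Ici (0:ℝ) := fun t =>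
      Set.mem_Ici.mpr (le_trans zero_le_one (le_max_left _ _))
    have hψmono : Monotone ψ := fun a b hab =>
      hmono.monotoneOn (hmemI a) (hmemI b) (max_le_max le_rfl hab)
    have hψbdd : BddAbove (Set.range ψ) := ⟨M, by rintro x ⟨t, rfl⟩; exact (hMb _).2⟩
    set L := ⨆ t, ψ t with hLdef
    have hψlim : Filter.Tendsto ψ Filter.atTop (nhds L) := tendsto_atTop_ciSup hψmono hψbdd
    have hσψ : ∀ᶠ t in Filter.atTop, ψ t = σ t := by
      filter_upwards [Filter.eventually_ge_atTop (1:ℝ)] with t ht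
      simp only [hψdef]
      rw [max_eq_right ht]
    have hσlim : Filter.Tendsto σ Filter.atTop (nhds L) := hψlim.congr' hσψ
    have hσleL : ∀ t, σ (max 1 t) ≤ L := fun t => le_ciSup hψbdd t
    have hclim : Filter.Tendsto (fun t => (deriv σ t)^2) Filter.atTop
        (nhds (1 - τ^2 * Real.cosh L^2)) := by
      have h1 : Filter.Tendsto (fun t => 1 - τ^2 * Real.cosh (σ t)^2) Filter.atTop
          (nhds (1 - τ^2 * Real.cosh L^2)) := by
        apply Filter.Tendsto.const_sub
        apply Filter.Tendsto.const_mul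
        exact ((Real.continuous_cosh.tendsto L).comp hσlim).pow 2
      exact h1.congr (fun t => by nlinarith [hode t])
    have hv0 : 1 - τ^2 * Real.cosh L^2 = 0 := by
      by_contra hv
      have hvge : 0 ≤ 1 - τ^2 * Real.cosh L^2 :=
        ge_of_tendsto hclim (Filter.Eventually.of_forall fun t => sq_nonneg _)
      have hvpos : 0 < 1 - τ^2 * Real.cosh L^2 := hvge.lt_of_ne (Ne.symm hv)
      set v := 1 - τ^2 * Real.cosh L^2 with hvdef
      have hev2 : ∀ᶠ t in Filter.atTop, v/2 < (deriv σ t)^2 :=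
        hclim.eventually_const_lt (by linarith)
      obtain ⟨T₀, hT₀⟩ := Filter.eventually_atTop.mp hev2
      set T := max T₀ 1 with hTdef
      have hT1 : (1:ℝ) ≤ T := le_max_right _ _
      have hder_lb : ∀ t, T ≤ t → v/2 ≤ deriv σ t := by
        intro t ht
        have h1 := hT₀ t (le_trans (le_max_left _ _) ht)
        have h2 : 0 < deriv σ t := hpos t (by linarith)
        have h3 := abs_le.mp (habs t)
        nlinarith
      have hgrow : ∀ t, T ≤ t → σ T + v/2 * (t - T) ≤ σ t := by
        intro t ht
        have hmono2 : MonotoneOn (fun u => σ u - v/2 * u) (Set.Ici T) := by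
          have hcF : Continuous (fun u : ℝ => σ u - v/2 * u) := by fun_prop
          have hdF : Differentiable ℝ (fun u : ℝ => σ u - v/2 * u) := by fun_prop
          apply monotoneOn_of_deriv_nonneg (convex_Ici T) hcF.continuousOn
            hdF.differentiableOn
          intro x hx
          rw [interior_Ici] at hx
          have hder : deriv (fun u => σ u - v/2 * u) x = deriv σ x - v/2 := by
            have hh := ((hd x).hasDerivAt.sub ((hasDerivAt_id x).const_mul (v/2))).deriv
            rw [mul_one] at hh; exact hh
          rw [hder]
          linarith [hder_lb x (le_of_lt hx)]
        have hh := hmono2 (Set.mem_Ici.mpr le_rfl) (Set.mem_Ici.mpr ht) ht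
        simp only at hh
        linarith
      have hσTL : σ T ≤ L := by
        have := hσleL T
        rwa [max_eq_right hT1] at this
      set t₂ := T + (2/v) * (L - σ T) + 1 with ht₂def
      have ht₂ : T ≤ t₂ := by
        have : 0 ≤ (2/v) * (L - σ T) := mul_nonneg (by positivity) (by linarith)
        simp only [ht₂def]
        linarith
      have h1 := hgrow t₂ ht₂
      have h2 : σ t₂ ≤ L := by
        have := hσleL t₂
        rwa [max_eq_right (by linarith : (1:ℝ) ≤ t₂)] at this
      have h3 : v/2 * (t₂ - T) = (L - σ T) + v/2 := by
        simp only [ht₂def]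
        field_simp
        ring
      linarith
    have hcoshL : τ * Real.cosh L = 1 := by
      nlinarith [mul_pos hτ0 (Real.cosh_pos L), sq_nonneg (τ * Real.cosh L - 1),
        sq_nonneg (τ * Real.cosh L + 1)]
    have hσ0T : σ 0 < L := by
      have h01 : σ 0 < σ 1 := hmono (Set.mem_Ici.mpr le_rfl) (Set.mem_Ici.mpr zero_le_one)
        zero_lt_one
      have h1L : σ 1 ≤ L := by
        have := hσleL 1
        rwa [max_self] at this
      linarith
    have hLpos : 0 < L := by
      by_contra hL
      push_neg at hL
      have habs2 : |L| < |σ 0| := by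
        rw [abs_of_nonpos hL, abs_of_nonpos (le_of_lt hneg)]
        linarith
      have hc1 := Real.cosh_lt_cosh.mpr habs2
      have hc2 := hcosh 0
      nlinarith [Real.cosh_pos L]
    have hsinhL : 0 < Real.sinh L := Real.sinh_pos_iff.mpr hLpos
    set c := τ^2 * (Real.cosh L * Real.sinh L) with hcdef
    have hcpos : 0 < c := mul_pos (by positivity) (mul_pos (Real.cosh_pos L) hsinhL)
    have hddlim : Filter.Tendsto (fun t => deriv (deriv σ) t) Filter.atTop (nhds (-c)) := by
      have h1 : Filter.Tendsto (fun t => -(τ^2) * (Real.cosh (σ t) * Real.sinh (σ t)))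
          Filter.atTop (nhds (-(τ^2) * (Real.cosh L * Real.sinh L))) := by
        apply Filter.Tendsto.const_mul
        exact ((Real.continuous_cosh.tendsto L).comp hσlim).mul
          ((Real.continuous_sinh.tendsto L).comp hσlim)
      have h2 : ∀ t, deriv (deriv σ) t = -(τ^2) * (Real.cosh (σ t) * Real.sinh (σ t)) := by
        intro t
        have := hFzero t
        simp only [hFdef] at this
        linarith
      rw [show -c = -(τ^2) * (Real.cosh L * Real.sinh L) by simp only [hcdef]; ring]
      exact h1.congr (fun t => (h2 t).symm)
    have hev3 : ∀ᶠ t in Filter.atTop, deriv (deriv σ) t < -c/2 :=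
      hddlim.eventually_lt_const (by linarith)
    obtain ⟨T₀, hT₀⟩ := Filter.eventually_atTop.mp hev3
    set T := max T₀ 1 with hTdef
    have hT1 : (1:ℝ) ≤ T := le_max_right _ _
    have hanti : AntitoneOn (fun u => deriv σ u + c/2 * u) (Set.Ici T) := by
      have hcF : Continuous (fun u : ℝ => deriv σ u + c/2 * u) := by fun_prop
      have hdF : Differentiable ℝ (fun u : ℝ => deriv σ u + c/2 * u) := by fun_prop
      apply antitoneOn_of_deriv_nonpos (convex_Ici T) hcF.continuousOn
        hdF.differentiableOn
      intro x hx
      rw [interior_Ici] at hx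
      have hder : deriv (fun u => deriv σ u + c/2 * u) x = deriv (deriv σ) x + c/2 := by
        have hh := ((hd1 x).hasDerivAt.add ((hasDerivAt_id x).const_mul (c/2))).deriv
        rw [mul_one] at hh; exact hh
      rw [hder]
      linarith [hT₀ x (le_trans (le_max_left _ _) (le_of_lt hx))]
    have hσTpos : 0 < deriv σ T := hpos T (by linarith)
    set t₃ := T + (2/c) * (deriv σ T) + 1 with ht₃def
    have ht₃T : T ≤ t₃ := by
      have : 0 ≤ (2/c) * (deriv σ T) := mul_nonneg (by positivity) (le_of_lt hσTpos)
      simp only [ht₃def]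
      linarith
    have hh := hanti (Set.mem_Ici.mpr le_rfl) (Set.mem_Ici.mpr ht₃T) ht₃T
    simp only at hh
    have hkey3 : c/2 * (t₃ - T) = deriv σ T + c/2 := by
      simp only [ht₃def]
      field_simp
      ring
    have ht₃pos : (0:ℝ) < t₃ := by linarith
    have := hpos t₃ ht₃pos
    linarith
  obtain ⟨s₁, hs₁pos, hs₁0⟩ := hex
  have hrefl := reflect_sym (gclamp τ M) K hglip σ hd hd1 hF' s₁ hs₁0
  refine ⟨2*s₁, by linarith, fun t => ?_⟩
  have h1 := hrefl (-t)
  rw [show 2*s₁ - (-t) = t + 2*s₁ by ring] at h1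
  rw [h1, heven]
end

section
/- For τ ∈ (0,1), if σ solves (σ')² + τ²cosh²σ = 1 with σ'(0)=0, σ(0)<0, and 2s_τ is its least period, then σ is odd about its critical points in the sense that cosh(2σ) is periodic with period s_τ. -/
open Real Set

private lemma abs_le_cosh' (x : ℝ) : |x| ≤ Real.cosh x :=
  calc |x| ≤ Real.sinh |x| := Real.self_le_sinh_iff.mpr (abs_nonneg x)
    _ ≤ Real.cosh |x| := (Real.sinh_lt_cosh _).le
    _ = Real.cosh x := Real.cosh_abs x

private noncomputable def clM (M x : ℝ) : ℝ := max (-M) (min x M)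

private lemma clM_eq {M x : ℝ} (h : |x| ≤ M) : clM M x = x := by
  have h1 := abs_le.mp h
  unfold clM
  rw [min_eq_left h1.2, max_eq_right h1.1]

private lemma clM_abs_le {M : ℝ} (hM : 0 ≤ M) (x : ℝ) : |clM M x| ≤ M := by
  unfold clM
  rw [abs_le]
  refine ⟨le_max_left _ _, max_le (by linarith) (min_le_right _ _)⟩

private lemma clM_lip (M x y : ℝ) : |clM M x - clM M y| ≤ |x - y| := by
  unfold clM
  rw [max_comm (-M) (min x M), max_comm (-M) (min y M)]
  refine (abs_max_sub_max_le_abs _ _ _).trans ?_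
  refine (abs_min_sub_min_le_max x M y M).trans ?_
  simp

private lemma cosh_sinh_lip {τ M : ℝ} (hM : 0 ≤ M) {x y : ℝ} (hx : |x| ≤ M) (hy : |y| ≤ M) :
    |τ^2 * Real.cosh x * Real.sinh x - τ^2 * Real.cosh y * Real.sinh y|
      ≤ (2 * τ^2 * Real.cosh M ^ 2) * |x - y| := by
  have key := Convex.norm_image_sub_le_of_norm_hasDerivWithin_le
    (f := fun z => τ^2 * Real.cosh z * Real.sinh z)
    (f' := fun z => (τ^2 * Real.sinh z) * Real.sinh z + (τ^2 * Real.cosh z) * Real.cosh z)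
    (s := Icc (-M) M) (C := 2 * τ^2 * Real.cosh M ^ 2)
    (fun z _ => (((Real.hasDerivAt_cosh z).const_mul (τ^2)).mul
      (Real.hasDerivAt_sinh z)).hasDerivWithinAt)
    (fun z hz => ?_) (convex_Icc _ _) (abs_le.mp hy) (abs_le.mp hx)
  · simpa [Real.norm_eq_abs] using key
  · have h1 : Real.cosh z ≤ Real.cosh M := by
      rw [Real.cosh_le_cosh, abs_of_nonneg hM]
      exact abs_le.mpr hz
    have h2 : |Real.sinh z| ≤ Real.cosh M :=
      le_trans (Real.abs_sinh z ▸ (Real.sinh_lt_cosh |z|).le) (Real.cosh_abs z ▸ h1)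
    have h3 : (0:ℝ) < Real.cosh z := Real.cosh_pos z
    have h4 : (0:ℝ) ≤ Real.cosh M := (Real.cosh_pos M).le
    rw [Real.norm_eq_abs]
    have h5 : |Real.sinh z * Real.sinh z| ≤ Real.cosh M ^ 2 := by
      rw [abs_mul]; nlinarith [abs_nonneg (Real.sinh z)]
    calc |(τ^2 * Real.sinh z) * Real.sinh z + (τ^2 * Real.cosh z) * Real.cosh z|
        ≤ |(τ^2 * Real.sinh z) * Real.sinh z| + |(τ^2 * Real.cosh z) * Real.cosh z| :=
          abs_add_le _ _
      _ ≤ τ^2 * Real.cosh M ^ 2 + τ^2 * Real.cosh M ^ 2 := by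
          have b1 : |τ ^ 2 * Real.sinh z * Real.sinh z| ≤ τ^2 * Real.cosh M ^ 2 := by
            rw [mul_assoc, abs_mul, abs_of_nonneg (sq_nonneg τ)]
            exact mul_le_mul_of_nonneg_left h5 (sq_nonneg τ)
          have b2 : |τ ^ 2 * Real.cosh z * Real.cosh z| ≤ τ^2 * Real.cosh M ^ 2 := by
            rw [mul_assoc, abs_mul, abs_of_nonneg (sq_nonneg τ)]
            refine mul_le_mul_of_nonneg_left ?_ (sq_nonneg τ)
            rw [abs_mul, abs_of_pos h3]
            nlinarith
          linarith
      _ = 2 * τ^2 * Real.cosh M ^ 2 := by ring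

private noncomputable def vf (τ M : ℝ) : ℝ × ℝ → ℝ × ℝ :=
  fun p => (p.2, -(τ^2 * Real.cosh (clM M p.1) * Real.sinh (clM M p.1)))

private noncomputable def Kf (τ M : ℝ) : NNReal :=
  ⟨max 1 (2 * τ^2 * Real.cosh M ^ 2), le_trans zero_le_one (le_max_left _ _)⟩

private lemma vf_lip (τ M : ℝ) (hM : 0 ≤ M) : LipschitzWith (Kf τ M) (vf τ M) := by
  apply LipschitzWith.of_dist_le_mul
  intro p q
  have hK : ((Kf τ M : NNReal) : ℝ) = max 1 (2 * τ^2 * Real.cosh M ^ 2) := rfl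
  have hd1 : dist p.1 q.1 ≤ dist p q := by rw [Prod.dist_eq]; exact le_max_left _ _
  have hd2 : dist p.2 q.2 ≤ dist p q := by rw [Prod.dist_eq]; exact le_max_right _ _
  rw [show vf τ M p = (p.2, -(τ^2 * Real.cosh (clM M p.1) * Real.sinh (clM M p.1))) from rfl,
    show vf τ M q = (q.2, -(τ^2 * Real.cosh (clM M q.1) * Real.sinh (clM M q.1))) from rfl,
    Prod.dist_eq]
  apply max_le
  · calc dist p.2 q.2 ≤ dist p q := hd2
      _ ≤ (Kf τ M : ℝ) * dist p q := by
          rw [hK]; nlinarith [dist_nonneg (x := p) (y := q), le_max_left 1 (2 * τ^2 * Real.cosh M ^ 2)]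
  · rw [dist_neg_neg, Real.dist_eq]
    calc |τ^2 * Real.cosh (clM M p.1) * Real.sinh (clM M p.1)
            - τ^2 * Real.cosh (clM M q.1) * Real.sinh (clM M q.1)|
        ≤ (2 * τ^2 * Real.cosh M ^ 2) * |clM M p.1 - clM M q.1| :=
          cosh_sinh_lip hM (clM_abs_le hM _) (clM_abs_le hM _)
      _ ≤ (2 * τ^2 * Real.cosh M ^ 2) * |p.1 - q.1| := by
          refine mul_le_mul_of_nonneg_left (clM_lip M _ _) ?_
          positivity
      _ ≤ (Kf τ M : ℝ) * dist p q := by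
          rw [hK, ← Real.dist_eq]
          refine mul_le_mul (le_max_right _ _) hd1 dist_nonneg ?_
          exact le_trans zero_le_one (le_max_left _ _)

private lemma ode_unique (τ M : ℝ) (hM : 0 ≤ M) (f g f' g' : ℝ → ℝ)
    (hf1 : ∀ s, HasDerivAt f (f' s) s)
    (hf2 : ∀ s, HasDerivAt f' (-(τ^2 * Real.cosh (f s) * Real.sinh (f s))) s)
    (hfb : ∀ s, |f s| ≤ M)
    (hg1 : ∀ s, HasDerivAt g (g' s) s)
    (hg2 : ∀ s, HasDerivAt g' (-(τ^2 * Real.cosh (g s) * Real.sinh (g s))) s)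
    (hgb : ∀ s, |g s| ≤ M)
    (h0 : f 0 = g 0) (h0' : f' 0 = g' 0) : ∀ t, f t = g t := by
  intro t
  set F : ℝ → ℝ × ℝ := fun s => (f s, f' s) with hF
  set G : ℝ → ℝ × ℝ := fun s => (g s, g' s) with hG
  have hFd : ∀ s, HasDerivAt F (vf τ M (F s)) s := by
    intro s
    have hv : vf τ M (F s) = (f' s, -(τ^2 * Real.cosh (f s) * Real.sinh (f s))) := by
      simp only [vf, hF, clM_eq (hfb s)]
    rw [hv]
    exact HasDerivAt.prodMk (hf1 s) (hf2 s)
  have hGd : ∀ s, HasDerivAt G (vf τ M (G s)) s := by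
    intro s
    have hv : vf τ M (G s) = (g' s, -(τ^2 * Real.cosh (g s) * Real.sinh (g s))) := by
      simp only [vf, hG, clM_eq (hgb s)]
    rw [hv]
    exact HasDerivAt.prodMk (hg1 s) (hg2 s)
  have h0mem : (0:ℝ) ∈ Ioo (-(|t|+1)) (|t|+1) :=
    ⟨by nlinarith [abs_nonneg t], by nlinarith [abs_nonneg t]⟩
  have key := ODE_solution_unique_of_mem_Icc
    (v := fun _ => vf τ M) (s := fun _ => (univ : Set (ℝ × ℝ))) (K := Kf τ M)
    (fun _ _ => (vf_lip τ M hM).lipschitzOnWith)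
    (t₀ := 0) (a := -(|t|+1)) (b := |t|+1) h0mem
    (fun x _ => (hFd x).continuousAt.continuousWithinAt)
    (fun x _ => hFd x) (fun _ _ => mem_univ _)
    (fun x _ => (hGd x).continuousAt.continuousWithinAt)
    (fun x _ => hGd x) (fun _ _ => mem_univ _)
    (by rw [hF, hG]; exact Prod.ext h0 h0')
  have ht : t ∈ Icc (-(|t|+1)) (|t|+1) := by
    constructor
    · linarith [neg_abs_le t]
    · linarith [le_abs_self t]
  exact congrArg Prod.fst (key ht)

/-- For τ ∈ (0,1), if σ solves (σ')² + τ²cosh²σ = 1 with σ'(0)=0, σ(0)<0, and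
2s_τ is its least period, then cosh(2σ) is periodic with period s_τ. -/
theorem cosh_two_sigma_half_periodic (τ : ℝ) (hτ : τ ∈ Set.Ioo (0 : ℝ) 1)
    (σ : ℝ → ℝ) (hσ : ContDiff ℝ (⊤ : ℕ∞) σ)
    (hode : ∀ s : ℝ, (deriv σ s) ^ 2 + τ ^ 2 * (Real.cosh (σ s)) ^ 2 = 1)
    (h0 : deriv σ 0 = 0) (hneg : σ 0 < 0)
    (hnc : ¬ (∃ c : ℝ, ∀ s : ℝ, σ s = c))
    (sτ : ℝ)
    (hper : IsLeast {p : ℝ | 0 < p ∧ Function.Periodic σ p} (2 * sτ)) :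
    Function.Periodic (fun s => Real.cosh (2 * σ s)) sτ := by
  obtain ⟨hτ0, hτ1⟩ := hτ
  have hsinf : ContDiff ℝ (⊤ : ℕ∞) σ := hσ.of_le (mod_cast le_top)
  have hσ' : ContDiff ℝ (⊤ : ℕ∞) (deriv σ) := (contDiff_infty_iff_deriv.mp hsinf).2
  have hd1 : ∀ s, HasDerivAt σ (deriv σ s) s :=
    fun s => (hsinf.differentiable (by simp) s).hasDerivAt
  have hd2 : ∀ s, HasDerivAt (deriv σ) (deriv (deriv σ) s) s :=
    fun s => (hσ'.differentiable (by simp) s).hasDerivAt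
  have hcont2 : Continuous (deriv (deriv σ)) :=
    ((contDiff_infty_iff_deriv.mp hσ').2).continuous
  -- step 1 : product identity
  have hprod : ∀ s, deriv σ s *
      (deriv (deriv σ) s + τ^2 * Real.cosh (σ s) * Real.sinh (σ s)) = 0 := by
    intro s
    have h1 : HasDerivAt (fun u => (deriv σ u)^2)
        (2 * deriv σ s * deriv (deriv σ) s) s := by
      have := (hd2 s).pow 2
      norm_num at this
      exact this
    have h2 : HasDerivAt (fun u => Real.cosh (σ u)) (Real.sinh (σ s) * deriv σ s) s :=
      (Real.hasDerivAt_cosh (σ s)).comp s (hd1 s)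
    have h3 : HasDerivAt (fun u => (Real.cosh (σ u))^2)
        (2 * Real.cosh (σ s) * (Real.sinh (σ s) * deriv σ s)) s := by
      have := h2.pow 2
      norm_num at this
      exact this
    have hH : HasDerivAt (fun u => (deriv σ u)^2 + τ^2 * (Real.cosh (σ u))^2)
        (2 * deriv σ s * deriv (deriv σ) s
          + τ^2 * (2 * Real.cosh (σ s) * (Real.sinh (σ s) * deriv σ s))) s :=
      h1.add (h3.const_mul (τ^2))
    have hconst : (fun u => (deriv σ u)^2 + τ^2 * (Real.cosh (σ u))^2) = fun _ => (1:ℝ) :=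
      funext hode
    have hzero : HasDerivAt (fun u => (deriv σ u)^2 + τ^2 * (Real.cosh (σ u))^2) 0 s := by
      rw [hconst]; exact hasDerivAt_const s 1
    have := hH.unique hzero
    linear_combination this / 2
  -- step 2 : second order ODE everywhere, via clopen argument
  have hODE2 : ∀ s, deriv (deriv σ) s = -(τ^2 * Real.cosh (σ s) * Real.sinh (σ s)) := by
    have hEcont : Continuous
        (fun s => deriv (deriv σ) s + τ^2 * Real.cosh (σ s) * Real.sinh (σ s)) := by
      have hcσ : Continuous σ := hsinf.continuous
      continuity
    set B := {s : ℝ | deriv (deriv σ) s + τ^2 * Real.cosh (σ s) * Real.sinh (σ s) ≠ 0} with hB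
    have hBopen : IsOpen B := isOpen_ne_fun hEcont continuous_const
    have hBsub : ∀ s ∈ B, deriv σ s = 0 := by
      intro s hs
      rcases mul_eq_zero.mp (hprod s) with h | h
      · exact h
      · exact absurd h hs
    have hBeq : B = {s | deriv σ s = 0 ∧ deriv (deriv σ) s = 0} := by
      ext s
      constructor
      · intro hs
        refine ⟨hBsub s hs, ?_⟩
        have hev : deriv σ =ᶠ[nhds s] (fun _ => (0:ℝ)) :=
          Filter.eventually_of_mem (hBopen.mem_nhds hs) hBsub
        rw [hev.deriv_eq, deriv_const]
      · rintro ⟨h1, h2⟩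
        have hcosh : τ^2 * Real.cosh (σ s)^2 = 1 := by
          have := hode s; rw [h1] at this; linarith
        have hσne : σ s ≠ 0 := by
          intro h
          rw [h, Real.cosh_zero] at hcosh
          nlinarith
        simp only [hB, Set.mem_setOf_eq, h2, zero_add]
        exact mul_ne_zero (mul_ne_zero (pow_ne_zero 2 hτ0.ne') (Real.cosh_pos _).ne')
          (Real.sinh_ne_zero.mpr hσne)
    have hBclosed : IsClosed B := by
      rw [hBeq]
      exact (isClosed_eq (hσ'.continuous) continuous_const).inter
        (isClosed_eq hcont2 continuous_const)
    rcases isClopen_iff.mp ⟨hBclosed, hBopen⟩ with hBe | hBu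
    · intro s
      have : s ∉ B := by rw [hBe]; exact notMem_empty s
      rw [hB, Set.mem_setOf_eq, not_not] at this
      linarith
    · exfalso
      apply hnc
      refine ⟨σ 0, fun s => ?_⟩
      have hall : ∀ x, deriv σ x = 0 := by
        intro x
        exact hBsub x (by rw [hBu]; trivial)
      exact is_const_of_deriv_eq_zero (hsinf.differentiable (by simp)) hall s 0
  -- bounds
  have hb : ∀ s, |σ s| ≤ τ⁻¹ := by
    intro s
    have h1 : τ^2 * Real.cosh (σ s)^2 ≤ 1 := by nlinarith [hode s, sq_nonneg (deriv σ s)]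
    have h2 : τ * Real.cosh (σ s) ≤ 1 := by nlinarith [Real.cosh_pos (σ s)]
    have h3 : Real.cosh (σ s) ≤ τ⁻¹ := by
      rw [← one_div, le_div_iff₀ hτ0]
      linarith
    exact (abs_le_cosh' (σ s)).trans h3
  have hM0 : (0:ℝ) ≤ τ⁻¹ := by positivity
  have hf2 : ∀ s, HasDerivAt (deriv σ)
      (-(τ^2 * Real.cosh (σ s) * Real.sinh (σ s))) s :=
    fun s => hODE2 s ▸ hd2 s
  -- evenness
  have heven : ∀ t, σ t = σ (-t) := by
    apply ode_unique τ τ⁻¹ hM0 σ (fun s => σ (-s)) (deriv σ) (fun s => -deriv σ (-s))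
      hd1 hf2 hb
    · intro s
      have := (hd1 (-s)).comp s (hasDerivAt_neg s)
      simpa [Function.comp_def] using this
    · intro s
      have := ((hf2 (-s)).comp s (hasDerivAt_neg s)).neg
      simpa [Function.comp_def, Pi.neg_def] using this
    · intro s
      simpa using hb (-s)
    · simp
    · simp [h0]
  have hsτpos : 0 < sτ := by have := hper.1.1; linarith
  have hperσ : Function.Periodic σ (2 * sτ) := hper.1.2
  -- critical point at sτ
  have hcrit : deriv σ sτ = 0 := by
    have hrefl : (fun s => σ (2*sτ - s)) = σ := by
      funext s
      rw [show 2*sτ - s = -(s - 2*sτ) by ring, ← heven (s - 2*sτ)]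
      exact hperσ.sub_eq s
    have hd_refl : HasDerivAt (fun s => σ (2*sτ - s)) (-(deriv σ sτ)) sτ := by
      have hinner : HasDerivAt (fun s : ℝ => 2*sτ - s) (-1) sτ := by
        simpa using (hasDerivAt_id sτ).const_sub (2*sτ)
      have h := (hd1 (2*sτ - sτ)).comp sτ hinner
      have h2 : 2*sτ - sτ = sτ := by ring
      rw [h2] at h
      simpa [Function.comp_def] using h
    have h' := hd_refl
    rw [hrefl] at h'
    have := (hd1 sτ).unique h'
    linarith
  -- cosh values at critical points agree
  have hccsq : Real.cosh (σ sτ)^2 = Real.cosh (σ 0)^2 := by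
    have hA : τ^2 * Real.cosh (σ sτ)^2 = 1 := by
      have := hode sτ; rw [hcrit] at this; linarith
    have hB : τ^2 * Real.cosh (σ 0)^2 = 1 := by
      have := hode 0; rw [h0] at this; linarith
    have hττ : τ^2 ≠ 0 := pow_ne_zero 2 hτ0.ne'
    field_simp at hA hB
    nlinarith [hA, hB]
  have hcc : Real.cosh (σ sτ) = Real.cosh (σ 0) := by
    nlinarith [Real.cosh_pos (σ sτ), Real.cosh_pos (σ 0), hccsq]
  have habs : |σ sτ| = |σ 0| :=
    le_antisymm (Real.cosh_le_cosh.mp hcc.le) (Real.cosh_le_cosh.mp hcc.ge)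
  rcases abs_eq_abs.mp habs with hcase | hcase
  · -- σ sτ = σ 0 : contradiction with least period
    exfalso
    have hshift : ∀ t, σ t = σ (t + sτ) := by
      apply ode_unique τ τ⁻¹ hM0 σ (fun s => σ (s + sτ)) (deriv σ)
        (fun s => deriv σ (s + sτ)) hd1 hf2 hb
      · intro s
        have := (hd1 (s + sτ)).comp s ((hasDerivAt_id s).add_const sτ)
        simpa [Function.comp_def] using this
      · intro s
        have := (hf2 (s + sτ)).comp s ((hasDerivAt_id s).add_const sτ)
        simpa [Function.comp_def] using this
      · intro s; exact hb (s + sτ)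
      · rw [zero_add]; exact hcase.symm
      · rw [zero_add, h0, hcrit]
    have hp : Function.Periodic σ sτ := fun x => (hshift x).symm
    have := hper.2 ⟨hsτpos, hp⟩
    linarith
  · -- σ sτ = -σ 0 : odd symmetry
    have hodd : ∀ t, σ t = -σ (t + sτ) := by
      apply ode_unique τ τ⁻¹ hM0 σ (fun s => -σ (s + sτ)) (deriv σ)
        (fun s => -deriv σ (s + sτ)) hd1 hf2 hb
      · intro s
        have := ((hd1 (s + sτ)).comp s ((hasDerivAt_id s).add_const sτ)).neg
        simpa [Function.comp_def, Pi.neg_def] using this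
      · intro s
        have h := ((hf2 (s + sτ)).comp s ((hasDerivAt_id s).add_const sτ)).neg
        have hval : -(-(τ^2 * Real.cosh (σ (s + sτ)) * Real.sinh (σ (s + sτ))) * 1)
            = -(τ^2 * Real.cosh (-σ (s + sτ)) * Real.sinh (-σ (s + sτ))) := by
          rw [Real.cosh_neg, Real.sinh_neg]; ring
        have h2 : HasDerivAt (fun s => -deriv σ (s + sτ))
            (-(τ^2 * Real.cosh (-σ (s + sτ)) * Real.sinh (-σ (s + sτ)))) s := by
          rw [← hval]
          simpa [Function.comp_def, Pi.neg_def] using h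
        simpa using h2
      · intro s; simpa using hb (s + sτ)
      · rw [zero_add, hcase, neg_neg]
      · rw [zero_add, h0, hcrit, neg_zero]
    intro x
    simp only
    have hx : σ (x + sτ) = -σ x := by linarith [hodd x]
    rw [hx, show (2:ℝ) * -σ x = -(2 * σ x) by ring, Real.cosh_neg]
end

section
/- For τ ∈ (0,1), on the interval (0, s_τ) (where 2s_τ is the least period of σ and s_τ is the first critical point after 0), σ is strictly increasing, and on (s_τ, 2s_τ), σ is strictly decreasing. -/
open Real


lemma aux_prod_zero (τ : ℝ) (σ : ℝ → ℝ) (hσ1 : Differentiable ℝ σ)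
    (hσd : Differentiable ℝ (deriv σ))
    (hode : ∀ s : ℝ, (deriv σ s) ^ 2 + τ ^ 2 * (Real.cosh (σ s)) ^ 2 = 1) :
    ∀ s : ℝ, deriv σ s * (deriv (deriv σ) s + τ ^ 2 * Real.sinh (σ s) * Real.cosh (σ s)) = 0 := by
  intro s
  have h1 : HasDerivAt σ (deriv σ s) s := (hσ1 s).hasDerivAt
  have h2 : HasDerivAt (deriv σ) (deriv (deriv σ) s) s := (hσd s).hasDerivAt
  have h3 : HasDerivAt (fun u => (deriv σ u) ^ 2) (2 * deriv σ s * deriv (deriv σ) s) s := by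
    exact (h2.pow 2).congr_deriv (by ring)
  have h4 : HasDerivAt (fun u => Real.cosh (σ u)) (Real.sinh (σ s) * deriv σ s) s :=
    (Real.hasDerivAt_cosh (σ s)).comp s h1
  have h5 : HasDerivAt (fun u => τ ^ 2 * (Real.cosh (σ u)) ^ 2)
      (τ ^ 2 * (2 * Real.cosh (σ s) * (Real.sinh (σ s) * deriv σ s))) s := by
    simpa [mul_comm, mul_assoc, mul_left_comm] using (h4.pow 2).const_mul (τ ^ 2)
  have h6 : HasDerivAt (fun u => (deriv σ u) ^ 2 + τ ^ 2 * (Real.cosh (σ u)) ^ 2) _ s := h3.add h5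
  have h7 : (fun u => (deriv σ u) ^ 2 + τ ^ 2 * (Real.cosh (σ u)) ^ 2) = fun _ => (1:ℝ) :=
    funext hode
  rw [h7] at h6
  have h8 := h6.unique (hasDerivAt_const s 1)
  linear_combination h8 / 2

lemma aux_second_deriv (τ : ℝ) (hτ : τ ∈ Set.Ioo (0 : ℝ) 1) (σ : ℝ → ℝ)
    (hσ1 : Differentiable ℝ σ) (hσd : Differentiable ℝ (deriv σ))
    (hσdd : Continuous (deriv (deriv σ)))
    (hode : ∀ s : ℝ, (deriv σ s) ^ 2 + τ ^ 2 * (Real.cosh (σ s)) ^ 2 = 1)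
    (hnc : ¬ (∃ c : ℝ, ∀ s : ℝ, σ s = c))
    (hprod : ∀ s : ℝ, deriv σ s *
      (deriv (deriv σ) s + τ ^ 2 * Real.sinh (σ s) * Real.cosh (σ s)) = 0) :
    ∀ s : ℝ, deriv (deriv σ) s = -(τ ^ 2 * Real.sinh (σ s) * Real.cosh (σ s)) := by
  by_contra h
  push_neg at h
  obtain ⟨t, ht⟩ := h
  set g : ℝ → ℝ := fun s => deriv (deriv σ) s + τ ^ 2 * Real.sinh (σ s) * Real.cosh (σ s) with hg
  have hgc : Continuous g := by
    exact hσdd.add ((continuous_const.mul (Real.continuous_sinh.comp hσ1.continuous)).mul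
      (Real.continuous_cosh.comp hσ1.continuous))
  -- wherever g ≠ 0, deriv σ vanishes on a neighborhood
  have key : ∀ s : ℝ, g s ≠ 0 → ∀ᶠ u in nhds s, deriv σ u = 0 := by
    intro s hs
    have h1 : ∀ᶠ u in nhds s, g u ≠ 0 := hgc.continuousAt.eventually_ne hs
    filter_upwards [h1] with u hu
    have := hprod u
    rcases mul_eq_zero.mp this with h | h
    · exact h
    · exact absurd h hu
  have hgt : g t ≠ 0 := by
    intro h0
    have h0' : deriv (deriv σ) t + τ ^ 2 * Real.sinh (σ t) * Real.cosh (σ t) = 0 := h0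
    exact ht (by linarith)
  -- basic facts at a critical point
  have hcrit : ∀ s : ℝ, deriv σ s = 0 → Real.sinh (σ s) ≠ 0 := by
    intro s hs
    have h1 := hode s
    rw [hs] at h1
    intro h2
    have h3 : σ s = 0 := Real.sinh_eq_zero.mp h2
    rw [h3] at h1
    simp [Real.cosh_zero] at h1
    rcases h1 with h | h <;> [linarith [hτ.2]; linarith [hτ.1]]
  -- the clopen set
  set W : Set ℝ := {s | σ s = σ t ∧ deriv σ s = 0 ∧ deriv (deriv σ) s = 0} with hW
  have hWclosed : IsClosed W := by
    apply IsClosed.inter (isClosed_eq hσ1.continuous continuous_const)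
    exact IsClosed.inter (isClosed_eq hσd.continuous continuous_const)
      (isClosed_eq hσdd continuous_const)
  have hσ't : deriv σ t = 0 := by
    rcases mul_eq_zero.mp (hprod t) with h | h
    · exact h
    · exact absurd h hgt
  have hσ''t : deriv (deriv σ) t = 0 := by
    have h1 : deriv σ =ᶠ[nhds t] (fun _ => (0:ℝ)) := key t hgt
    have := h1.deriv_eq
    simpa using this
  have htW : t ∈ W := ⟨rfl, hσ't, hσ''t⟩
  have hWopen : IsOpen W := by
    rw [isOpen_iff_mem_nhds]
    intro s hs
    obtain ⟨hs1, hs2, hs3⟩ := hs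
    have hgs : g s ≠ 0 := by
      have h4 : Real.sinh (σ s) ≠ 0 := hcrit s hs2
      have h5 : g s = τ ^ 2 * Real.sinh (σ s) * Real.cosh (σ s) := by
        show deriv (deriv σ) s + _ = _
        rw [hs3]; ring
      rw [h5]
      exact mul_ne_zero (mul_ne_zero (pow_ne_zero 2 (ne_of_gt hτ.1)) h4)
        (ne_of_gt (Real.cosh_pos (σ s)))
    have h5 := key s hgs
    obtain ⟨ε, hε, hball⟩ := Metric.eventually_nhds_iff_ball.mp h5
    have hsub : Metric.ball s ε ⊆ W := by
      intro y hy
      have hy2 : deriv σ y = 0 := hball y hy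
      have hy3 : deriv (deriv σ) y = 0 := by
        have hev : deriv σ =ᶠ[nhds y] (fun _ => (0:ℝ)) :=
          eventually_nhds_iff.mpr ⟨Metric.ball s ε, hball, Metric.isOpen_ball, hy⟩
        simpa using hev.deriv_eq
      have hy1 : σ y = σ t := by
        rw [← hs1]
        have hfz : ∀ z ∈ Metric.ball s ε, fderivWithin ℝ σ (Metric.ball s ε) z = 0 := by
          intro z hz
          rw [fderivWithin_of_isOpen Metric.isOpen_ball hz, ← toSpanSingleton_deriv, hball z hz]
          ext
          simp
        exact (convex_ball s ε).is_const_of_fderivWithin_eq_zero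
          hσ1.differentiableOn hfz hy (Metric.mem_ball_self hε)
      exact ⟨hy1, hy2, hy3⟩
    exact Filter.mem_of_superset (Metric.ball_mem_nhds s hε) hsub
  have huniv : W = Set.univ := by
    rcases isClopen_iff.mp ⟨hWclosed, hWopen⟩ with h | h
    · exact absurd (h ▸ htW) (Set.notMem_empty t)
    · exact h
  exact hnc ⟨σ t, fun s => (show s ∈ W from huniv ▸ Set.mem_univ s).1⟩

lemma aux_bound (τ : ℝ) (hτ : τ ∈ Set.Ioo (0 : ℝ) 1) (σ : ℝ → ℝ)
    (hode : ∀ s : ℝ, (deriv σ s) ^ 2 + τ ^ 2 * (Real.cosh (σ s)) ^ 2 = 1)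
    (h0 : deriv σ 0 = 0) (hneg : σ 0 < 0) :
    ∀ s : ℝ, σ s ∈ Set.Icc (-(-σ 0)) (-σ 0) := by
  intro s
  have e0 : τ ^ 2 * Real.cosh (σ 0) ^ 2 = 1 := by
    have := hode 0; rw [h0] at this; linarith
  have h1 : τ ^ 2 * Real.cosh (σ s) ^ 2 ≤ 1 := by nlinarith [sq_nonneg (deriv σ s), hode s]
  have h2 : Real.cosh (σ s) ≤ Real.cosh (σ 0) := by
    nlinarith [Real.cosh_pos (σ s), Real.cosh_pos (σ 0), hτ.1]
  have h3 : |σ s| ≤ |σ 0| := Real.cosh_le_cosh.mp h2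
  rw [abs_of_neg hneg] at h3
  have h4 := abs_le.mp h3
  constructor <;> [linarith [h4.1]; exact h4.2]

lemma aux_reflect (τ : ℝ) (σ : ℝ → ℝ) (a : ℝ) (ha : 0 < a)
    (hσ1 : Differentiable ℝ σ) (hσd : Differentiable ℝ (deriv σ))
    (hC : ∀ s : ℝ, deriv (deriv σ) s = -(τ ^ 2 * Real.sinh (σ s) * Real.cosh (σ s)))
    (hbd : ∀ s : ℝ, σ s ∈ Set.Icc (-a) a)
    (t : ℝ) (ht : deriv σ t = 0) : ∀ u : ℝ, σ (t + u) = σ (t - u) := by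
  intro u₀
  -- the vector field
  set h : ℝ → ℝ := fun x => -(τ ^ 2 * Real.sinh x * Real.cosh x) with hh_def
  set v : ℝ → ℝ × ℝ → ℝ × ℝ := fun _ p => (p.2, h p.1) with hv_def
  set S : ℝ → Set (ℝ × ℝ) := fun _ => {p : ℝ × ℝ | p.1 ∈ Set.Icc (-a) a} with hS_def
  -- Lipschitz constant for h on Icc (-a) a
  set C : NNReal := ⟨τ ^ 2 * (2 * Real.cosh a ^ 2), by positivity⟩ with hC_def
  have hhdiff : ∀ x : ℝ, HasDerivAt h (-(τ ^ 2 * (Real.cosh x ^ 2 + Real.sinh x ^ 2))) x := by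
    intro x
    show HasDerivAt (fun x => -(τ ^ 2 * Real.sinh x * Real.cosh x))
      (-(τ ^ 2 * (Real.cosh x ^ 2 + Real.sinh x ^ 2))) x
    have := (((Real.hasDerivAt_sinh x).mul (Real.hasDerivAt_cosh x)).const_mul (τ ^ 2)).neg
    have e : (fun x => -(τ ^ 2 * Real.sinh x * Real.cosh x)) =
        -fun y => τ ^ 2 * (Real.sinh * Real.cosh) y := by
      funext y; simp; ring
    rw [e]; exact this.congr_deriv (by ring)
  have hlip : LipschitzOnWith C h (Set.Icc (-a) a) := by
    apply Convex.lipschitzOnWith_of_nnnorm_deriv_le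
      (fun x _ => (hhdiff x).differentiableAt) _ (convex_Icc _ _)
    intro x hx
    rw [← NNReal.coe_le_coe, coe_nnnorm, Real.norm_eq_abs, (hhdiff x).deriv]
    show |(-(τ ^ 2 * (Real.cosh x ^ 2 + Real.sinh x ^ 2)))| ≤ τ ^ 2 * (2 * Real.cosh a ^ 2)
    have h1 : |x| ≤ |a| := by
      rw [abs_of_pos ha]; exact abs_le.mpr ⟨hx.1, hx.2⟩
    have h2 : Real.cosh x ≤ Real.cosh a := Real.cosh_le_cosh.mpr h1
    have h3 : Real.sinh x ^ 2 = Real.cosh x ^ 2 - 1 := by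
      have := Real.cosh_sq_sub_sinh_sq x; linarith
    have h4 : (0:ℝ) < Real.cosh x := Real.cosh_pos x
    have h5 : (0:ℝ) ≤ τ ^ 2 * (Real.cosh a - Real.cosh x) * (Real.cosh a + Real.cosh x) := by
      apply mul_nonneg (mul_nonneg (sq_nonneg τ) (by linarith)) (by positivity)
    rw [abs_of_nonpos (by nlinarith [sq_nonneg τ, sq_nonneg (Real.sinh x)])]
    nlinarith [sq_nonneg τ]
  set K : NNReal := max C 1 with hK_def
  have hKC : (C : ℝ) ≤ (K : ℝ) := by
    rw [hK_def]; exact_mod_cast le_max_left C 1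
  have hK1 : (1 : ℝ) ≤ (K : ℝ) := by
    rw [hK_def]; exact_mod_cast le_max_right C 1
  have hv : ∀ s : ℝ, LipschitzOnWith K (v s) (S s) := by
    intro s
    rw [lipschitzOnWith_iff_dist_le_mul]
    intro p hp q hq
    have hdp : dist (v s p) (v s q) = max (dist p.2 q.2) (dist (h p.1) (h q.1)) := Prod.dist_eq
    rw [hdp, Prod.dist_eq]
    have b1 : dist p.2 q.2 ≤ (K : ℝ) * max (dist p.1 q.1) (dist p.2 q.2) := by
      calc dist p.2 q.2 ≤ max (dist p.1 q.1) (dist p.2 q.2) := le_max_right _ _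
      _ ≤ (K : ℝ) * max (dist p.1 q.1) (dist p.2 q.2) := by
          nlinarith [dist_nonneg.trans (le_max_left (dist p.1 q.1) (dist p.2 q.2)),
            le_max_left (dist p.1 q.1) (dist p.2 q.2), dist_nonneg (x := p.1) (y := q.1)]
    have b2 : dist (h p.1) (h q.1) ≤ (K : ℝ) * max (dist p.1 q.1) (dist p.2 q.2) := by
      have := hlip.dist_le_mul p.1 hp q.1 hq
      calc dist (h p.1) (h q.1) ≤ (C : ℝ) * dist p.1 q.1 := this
      _ ≤ (K : ℝ) * max (dist p.1 q.1) (dist p.2 q.2) := by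
          apply mul_le_mul hKC (le_max_left _ _) dist_nonneg (by linarith)
    exact max_le b1 b2
  -- the two solutions
  set F : ℝ → ℝ × ℝ := fun u => (σ (t + u), deriv σ (t + u)) with hF_def
  set G : ℝ → ℝ × ℝ := fun u => (σ (t - u), -deriv σ (t - u)) with hG_def
  set b : ℝ := |u₀| + 1 with hb_def
  have h0b : (0 : ℝ) ∈ Set.Ioo (-b) b := by
    constructor <;> [nlinarith [abs_nonneg u₀]; nlinarith [abs_nonneg u₀]]
  have hF : ∀ u ∈ Set.Ioo (-b) b, HasDerivAt F (v u (F u)) u ∧ F u ∈ S u := by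
    intro u _
    have hadd : HasDerivAt (fun u : ℝ => t + u) 1 u := by
      simpa using (hasDerivAt_id u).const_add t
    have h1 : HasDerivAt (fun u : ℝ => σ (t + u)) (deriv σ (t + u)) u := by
      have := ((hσ1 (t + u)).hasDerivAt.comp u hadd)
      simp only [mul_one] at this; exact this
    have h2 : HasDerivAt (fun u : ℝ => deriv σ (t + u)) (deriv (deriv σ) (t + u)) u := by
      have := ((hσd (t + u)).hasDerivAt.comp u hadd)
      simp only [mul_one] at this; exact this
    refine ⟨?_, hbd (t + u)⟩
    have : v u (F u) = (deriv σ (t + u), deriv (deriv σ) (t + u)) := by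
      show (deriv σ (t + u), h (σ (t + u))) = _
      rw [hC (t + u)]
    rw [this]
    exact h1.prodMk h2
  have hG : ∀ u ∈ Set.Ioo (-b) b, HasDerivAt G (v u (G u)) u ∧ G u ∈ S u := by
    intro u _
    have hsub : HasDerivAt (fun u : ℝ => t - u) (-1) u := by
      simpa [sub_eq_add_neg] using ((hasDerivAt_id u).neg.const_add t)
    have h1 : HasDerivAt (fun u : ℝ => σ (t - u)) (-deriv σ (t - u)) u := by
      have := (hσ1 (t - u)).hasDerivAt.comp u hsub
      simp only [mul_neg, mul_one] at this; exact this
    have h2 : HasDerivAt (fun u : ℝ => -deriv σ (t - u)) (deriv (deriv σ) (t - u)) u := by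
      have := ((hσd (t - u)).hasDerivAt.comp u hsub).neg
      simp only [mul_neg, mul_one, neg_neg] at this; exact this
    refine ⟨?_, hbd (t - u)⟩
    have : v u (G u) = (-deriv σ (t - u), deriv (deriv σ) (t - u)) := by
      show (-deriv σ (t - u), h (σ (t - u))) = _
      rw [hC (t - u)]
    rw [this]
    exact h1.prodMk h2
  have heq : F 0 = G 0 := by
    show (σ (t + 0), deriv σ (t + 0)) = (σ (t - 0), -deriv σ (t - 0))
    rw [add_zero, sub_zero, ht]
    norm_num
  have := ODE_solution_unique_of_mem_Ioo (fun s _ => hv s) h0b hF hG heq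
  have hu₀ : u₀ ∈ Set.Ioo (-b) b := by
    constructor <;> [nlinarith [neg_abs_le u₀, abs_nonneg u₀]; nlinarith [le_abs_self u₀]]
  have := this hu₀
  exact congrArg Prod.fst this

/-- For τ ∈ (0,1), the unduloid profile σ is strictly increasing on (0, s_τ)
and strictly decreasing on (s_τ, 2s_τ), where 2s_τ is the least period. -/
theorem unduloid_monotonicity (τ : ℝ) (hτ : τ ∈ Set.Ioo (0 : ℝ) 1)
    (σ : ℝ → ℝ) (hσ : ContDiff ℝ (⊤ : ℕ∞) σ)
    (hode : ∀ s : ℝ, (deriv σ s) ^ 2 + τ ^ 2 * (Real.cosh (σ s)) ^ 2 = 1)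
    (h0 : deriv σ 0 = 0) (hneg : σ 0 < 0)
    (hnc : ¬ (∃ c : ℝ, ∀ s : ℝ, σ s = c))
    (sτ : ℝ)
    (hper : IsLeast {p : ℝ | 0 < p ∧ Function.Periodic σ p} (2 * sτ)) :
    StrictMonoOn σ (Set.Ioo 0 sτ) ∧ StrictAntiOn σ (Set.Ioo sτ (2 * sτ)) := by
  -- differentiability facts
  have hσT : ContDiff ℝ ((⊤ : ℕ∞) : WithTop ℕ∞) σ := hσ.of_le (mod_cast le_top)
  have hσ1 : Differentiable ℝ σ := (contDiff_infty_iff_deriv.mp hσT).1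
  have hσdT := (contDiff_infty_iff_deriv.mp hσT).2
  have hσd : Differentiable ℝ (deriv σ) := (contDiff_infty_iff_deriv.mp hσdT).1
  have hσdd : Continuous (deriv (deriv σ)) := (contDiff_infty_iff_deriv.mp hσdT).2.continuous
  have hprod := aux_prod_zero τ σ hσ1 hσd hode
  have hC := aux_second_deriv τ hτ σ hσ1 hσd hσdd hode hnc hprod
  have hbd := aux_bound τ hτ σ hode h0 hneg
  have ha : (0 : ℝ) < -σ 0 := by linarith
  have hrefl := aux_reflect τ σ (-σ 0) ha hσ1 hσd hC hbd
  have hmin : ∀ s : ℝ, σ 0 ≤ σ s := fun s => by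
    have := (hbd s).1; linarith [neg_neg (σ 0) ▸ this]
  -- evenness
  have heven : ∀ u : ℝ, σ u = σ (-u) := by
    intro u
    have := hrefl 0 h0 u
    simpa using this
  -- odd derivative
  have hodd : ∀ u : ℝ, deriv σ (-u) = -deriv σ u := by
    intro u
    have h1 : HasDerivAt (fun x : ℝ => σ (-x)) (-deriv σ (-u)) u := by
      have := (hσ1 (-u)).hasDerivAt.comp u (hasDerivAt_neg u)
      simp only [mul_neg, mul_one] at this; exact this
    have h2 : (fun x : ℝ => σ (-x)) = σ := funext fun x => (heven x).symm
    rw [h2] at h1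
    have h3 : deriv σ u = -deriv σ (-u) := h1.deriv
    linarith
  have hsτ : 0 < sτ := by have := hper.1.1; linarith
  -- no critical points in (0, sτ)
  have hncrit : ∀ x ∈ Set.Ioo 0 sτ, deriv σ x ≠ 0 := by
    intro x hx hx0
    have hp : Function.Periodic σ (2 * x) := by
      intro s
      have h1 := hrefl x hx0 (x + s)
      have e1 : x + (x + s) = s + 2 * x := by ring
      have e2 : x - (x + s) = -s := by ring
      rw [e1, e2] at h1
      rw [h1, ← heven s]
    have := hper.2 ⟨by linarith [hx.1], hp⟩
    linarith [hx.2]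
  -- positivity of deriv on (0, sτ)
  have hpos : ∀ x ∈ Set.Ioo 0 sτ, 0 < deriv σ x := by
    by_contra hcon
    push_neg at hcon
    obtain ⟨x, hx, hxle⟩ := hcon
    have hxlt : deriv σ x < 0 := lt_of_le_of_ne hxle (hncrit x hx)
    have hall : ∀ y ∈ Set.Ioo 0 sτ, deriv σ y < 0 := by
      intro y hy
      rcases lt_trichotomy (deriv σ y) 0 with h | h | h
      · exact h
      · exact absurd h (hncrit y hy)
      · exfalso
        have hcont : ContinuousOn (deriv σ) (Set.uIcc x y) := hσd.continuous.continuousOn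
        have h0mem : (0 : ℝ) ∈ Set.uIcc (deriv σ x) (deriv σ y) :=
          Set.mem_uIcc.mpr (Or.inl ⟨le_of_lt hxlt, le_of_lt h⟩)
        obtain ⟨z, hz, hz0⟩ := intermediate_value_uIcc hcont h0mem
        have hzI : z ∈ Set.Ioo 0 sτ := (Set.ordConnected_Ioo).uIcc_subset hx hy hz
        exact hncrit z hzI hz0
    have hanti : StrictAntiOn σ (Set.Icc 0 sτ) :=
      strictAntiOn_of_deriv_neg (convex_Icc 0 sτ) hσ1.continuous.continuousOn
        (by rw [interior_Icc]; exact hall)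
    have := hanti ⟨le_refl 0, le_of_lt hsτ⟩ ⟨le_of_lt hx.1, le_of_lt hx.2⟩ hx.1
    linarith [hmin x]
  constructor
  · exact strictMonoOn_of_deriv_pos (convex_Ioo 0 sτ) hσ1.continuous.continuousOn
      (by rw [interior_Ioo]; exact hpos)
  · -- derivative is periodic
    have hdper : ∀ x : ℝ, deriv σ (x + 2 * sτ) = deriv σ x := by
      intro x
      have h2 : (fun y : ℝ => σ (y + 2 * sτ)) = σ := funext fun y => hper.1.2 y
      have h1 : HasDerivAt (fun y : ℝ => σ (y + 2 * sτ)) (deriv σ (x + 2 * sτ)) x := by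
        have hadd : HasDerivAt (fun y : ℝ => y + 2 * sτ) 1 x := by
          simpa using (hasDerivAt_id x).add_const (2 * sτ)
        have := (hσ1 (x + 2 * sτ)).hasDerivAt.comp x hadd
        simp only [mul_one] at this; exact this
      rw [h2] at h1
      exact h1.deriv.symm ▸ rfl
    have hneg2 : ∀ x ∈ Set.Ioo sτ (2 * sτ), deriv σ x < 0 := by
      intro x hx
      have hy : 2 * sτ - x ∈ Set.Ioo 0 sτ := ⟨by linarith [hx.2], by linarith [hx.1]⟩
      have e1 : deriv σ x = deriv σ (-(2 * sτ - x)) := by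
        rw [show -(2 * sτ - x) = x - 2 * sτ by ring]
        rw [← hdper (x - 2 * sτ), show x - 2 * sτ + 2 * sτ = x by ring]
      rw [e1, hodd]
      linarith [hpos _ hy]
    exact strictAntiOn_of_deriv_neg (convex_Ioo sτ (2 * sτ)) hσ1.continuous.continuousOn
      (by rw [interior_Ioo]; exact hneg2)
end
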